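/- arXiv:2011.05414 — 3 statements merged into one kernel-verified Lean document; each statement's English description precedes it below -/
import Mathlib

section
/- For f(re^{iθ}) = r^p e^{imθ} and g(re^{iθ}) = r^q e^{inθ} with p, q real and m, n integers, the ⋄-convolution is: if ℓ := p + n − q + m ≠ 0, then (f ⋄ g)(re^{iθ}) = (((n−q)/ℓ)·r^{q−m} + ((m+p)/ℓ)·r^{p+n})·e^{i(m+n)θ}; if ℓ = 0, then (f ⋄ g)(re^{iθ}) = r^{q−m}(1 − (n−q)·log r)·e^{i(m+n)θ}. -/
open MeasureTheory Set

/-- The Mellin transform of a function on `(0,1)`. -/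
noncomputable def mellinT (φ : ℝ → ℂ) (ζ : ℂ) : ℂ :=
  ∫ r in Set.Ioo (0:ℝ) 1, φ r * (r : ℂ) ^ (ζ - 1)

/-- The ⋄-convolution of the quasihomogeneous functions `r^p e^{imθ}` and `r^q e^{inθ}`
is the quasihomogeneous function of degree `m + n` whose radial part `ω` satisfies
`M(ω)(ζ) = (ζ - m + n) M(r^p)(ζ + n) M(r^q)(ζ - m)` on a right half-plane. -/
def IsDiamondRadial (p q : ℝ) (m n : ℤ) (ω : ℝ → ℂ) : Prop :=
  ∃ σ : ℝ, ∀ ζ : ℂ, σ < ζ.re →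
    mellinT ω ζ = (ζ - m + n) * mellinT (fun r : ℝ => ((r ^ p : ℝ) : ℂ)) (ζ + n) *
      mellinT (fun r : ℝ => ((r ^ q : ℝ) : ℂ)) (ζ - m)

lemma aux_int1 {s : ℂ} (hs : 0 < s.re) :
    ∫ r in Ioo (0:ℝ) 1, (r:ℂ) ^ (s - 1) = 1 / s := by
  rw [← integral_Ioc_eq_integral_Ioo, ← intervalIntegral.integral_of_le zero_le_one,
    integral_cpow (Or.inl (by simp [Complex.sub_re]; linarith))]
  have hs0 : s ≠ 0 := fun h => by simp [h] at hs
  simp [sub_add_cancel, Complex.one_cpow, Complex.zero_cpow hs0]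

lemma aux_intOn1 {s : ℂ} (hs : 0 < s.re) :
    IntegrableOn (fun r : ℝ => (r:ℂ) ^ (s - 1)) (Ioo (0:ℝ) 1) := by
  rw [intervalIntegral.integrableOn_Ioo_cpow_iff zero_lt_one]
  simp [Complex.sub_re]; linarith

lemma aux_contOn {s : ℂ} : ContinuousOn (fun r : ℝ => (r:ℂ) ^ s) (Ioo (0:ℝ) 1) := by
  intro x hx
  exact (Complex.continuousAt_ofReal_cpow_const x s (Or.inr (ne_of_gt hx.1))).continuousWithinAt

lemma aux_intOn2 {s : ℂ} (hs : 0 < s.re) :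
    IntegrableOn (fun r : ℝ => (r:ℂ) ^ (s - 1) * Real.log r) (Ioo (0:ℝ) 1) := by
  have hmeas : AEStronglyMeasurable (fun r : ℝ => (r:ℂ) ^ (s - 1) * Real.log r)
      (volume.restrict (Ioo (0:ℝ) 1)) := by
    apply ContinuousOn.aestronglyMeasurable _ measurableSet_Ioo
    exact aux_contOn.mul (Complex.continuous_ofReal.comp_continuousOn
      (Real.continuousOn_log.mono (fun x hx => ne_of_gt hx.1)))
  set ε : ℝ := s.re / 2 with hε
  have hε0 : 0 < ε := by positivity
  have hg : IntegrableOn (fun r : ℝ => r ^ (s.re - 1 - ε) / ε) (Ioo (0:ℝ) 1) := by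
    exact ((intervalIntegral.integrableOn_Ioo_rpow_iff zero_lt_one).mpr
      (by simp only [hε]; linarith)).div_const ε
  refine Integrable.mono' hg hmeas ?_
  filter_upwards [ae_restrict_mem measurableSet_Ioo] with x hx
  have hx0 : 0 < x := hx.1
  have h1 : ‖(x:ℂ) ^ (s - 1) * (Real.log x : ℂ)‖ = x ^ (s.re - 1) * |Real.log x| := by
    rw [norm_mul, Complex.norm_cpow_eq_rpow_re_of_pos hx0]
    simp [Complex.sub_re, Complex.norm_real]
  rw [h1]
  have hlog : |Real.log x| ≤ x ^ (-ε) / ε := by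
    rw [abs_le]
    constructor
    · have := Real.log_le_rpow_div (le_of_lt (show (0:ℝ) < x⁻¹ by positivity)) hε0
      rw [Real.log_inv, Real.inv_rpow hx0.le, ← Real.rpow_neg hx0.le] at this
      linarith
    · have h2 : Real.log x ≤ 0 := Real.log_nonpos hx0.le hx.2.le
      have h3 : (0:ℝ) ≤ x ^ (-ε) / ε := by positivity
      linarith
  calc x ^ (s.re - 1) * |Real.log x| ≤ x ^ (s.re - 1) * (x ^ (-ε) / ε) := by
        apply mul_le_mul_of_nonneg_left hlog (by positivity)
    _ = x ^ (s.re - 1 - ε) / ε := by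
        rw [mul_div_assoc', ← Real.rpow_add hx0]; ring_nf

lemma aux_int2 {s : ℂ} (hs : 0 < s.re) :
    ∫ r in Ioo (0:ℝ) 1, (r:ℂ) ^ (s - 1) * Real.log r = -(1 / s ^ 2) := by
  have hs0 : s ≠ 0 := fun h => by simp [h] at hs
  set F : ℝ → ℂ := fun x => (x:ℂ) ^ s * ((s * Real.log x - 1) / s ^ 2) with hF
  have hderiv : ∀ x ∈ Ioo (0:ℝ) 1, HasDerivAt F ((x:ℂ) ^ (s - 1) * Real.log x) x := by
    intro x hx
    have hx0 : 0 < x := hx.1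
    have hxc : (x:ℂ) ≠ 0 := by exact_mod_cast ne_of_gt hx0
    have h1 : HasDerivAt (fun y : ℝ => (y:ℂ) ^ s) (s * (x:ℂ) ^ (s - 1)) x := by
      have hr1 : s - 1 ≠ -1 := by
        intro h; apply hs0
        have := congrArg (· + 1) h; simpa using this
      have h0 := (hasDerivAt_ofReal_cpow_const' (ne_of_gt hx0) hr1).const_mul s
      simp only [sub_add_cancel] at h0
      refine h0.congr_of_eventuallyEq (Filter.Eventually.of_forall fun y => ?_)
      field_simp
    have h2 : HasDerivAt (fun y : ℝ => ((s * Real.log y - 1) / s ^ 2 : ℂ))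
        (s * ((x⁻¹ : ℝ) : ℂ) / s ^ 2) x :=
      (((Real.hasDerivAt_log (ne_of_gt hx0)).ofReal_comp.const_mul s).sub_const 1).div_const (s ^ 2)
    have hprod := h1.mul h2
    refine HasDerivAt.congr_deriv hprod ?_
    have hxs : (x:ℂ) ^ s = (x:ℂ) ^ (s - 1) * x := by
      rw [Complex.cpow_sub _ _ hxc, Complex.cpow_one]
      field_simp
    rw [hxs]
    push_cast
    field_simp
    ring
  have hint : IntervalIntegrable (fun x : ℝ => (x:ℂ) ^ (s - 1) * Real.log x)
      volume 0 1 := by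
    rw [intervalIntegrable_iff_integrableOn_Ioo_of_le zero_le_one]
    exact aux_intOn2 hs
  have h0 : Filter.Tendsto F (nhdsWithin 0 (Ioi 0)) (nhds 0) := by
    rw [tendsto_zero_iff_norm_tendsto_zero]
    have hb : ∀ x ∈ Ioo (0:ℝ) 1, ‖F x‖ ≤
        (‖s‖ * |Real.log x * x ^ s.re| + x ^ s.re) / ‖s‖ ^ 2 := by
      intro x hx
      have hx0 : 0 < x := hx.1
      rw [hF]
      simp only [norm_mul, norm_div,
        Complex.norm_cpow_eq_rpow_re_of_pos hx0, norm_pow]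
      rw [mul_div_assoc']
      rw [div_le_div_iff_of_pos_right (pow_pos (norm_pos_iff.mpr hs0) 2)]
      have : ‖s * Real.log x - 1‖ ≤ ‖s‖ * |Real.log x| + 1 := by
        calc ‖s * Real.log x - 1‖ ≤ ‖s * Real.log x‖ + 1 := by
              simpa using (norm_sub_le (s * Real.log x) 1)
          _ = ‖s‖ * |Real.log x| + 1 := by
              rw [norm_mul, Complex.norm_real, Real.norm_eq_abs]
      calc x ^ s.re * ‖s * ↑(Real.log x) - 1‖
          ≤ x ^ s.re * (‖s‖ * |Real.log x| + 1) := by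
            apply mul_le_mul_of_nonneg_left this (by positivity)
        _ = ‖s‖ * |Real.log x * x ^ s.re| + x ^ s.re := by
            rw [abs_mul, abs_of_nonneg (Real.rpow_nonneg hx0.le _)]
            ring
    have hlim : Filter.Tendsto (fun x : ℝ =>
        (‖s‖ * |Real.log x * x ^ s.re| + x ^ s.re) / ‖s‖ ^ 2)
        (nhdsWithin 0 (Ioi 0)) (nhds 0) := by
      have t1 := tendsto_log_mul_rpow_nhdsGT_zero hs
      have t2 : Filter.Tendsto (fun x : ℝ => x ^ s.re) (nhdsWithin 0 (Ioi 0)) (nhds 0) := by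
        have := (Real.continuousAt_rpow_const 0 s.re (Or.inr hs.le)).tendsto
        rw [Real.zero_rpow (ne_of_gt hs)] at this
        exact this.mono_left nhdsWithin_le_nhds
      have := ((t1.abs.const_mul (‖s‖)).add t2).div_const (‖s‖ ^ 2)
      simpa using this
    apply squeeze_zero' _ _ hlim
    · filter_upwards [Ioo_mem_nhdsGT_of_mem (by constructor <;> norm_num : (0:ℝ) ∈ Ico (0:ℝ) 1)] with x hx
      exact norm_nonneg _
    · filter_upwards [Ioo_mem_nhdsGT_of_mem (by constructor <;> norm_num : (0:ℝ) ∈ Ico (0:ℝ) 1)] with x hx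
      exact hb x hx
  have h1 : Filter.Tendsto F (nhdsWithin 1 (Iio 1)) (nhds (-(1 / s ^ 2))) := by
    have hc : ContinuousAt F 1 := by
      apply ContinuousAt.mul
      · exact Complex.continuousAt_ofReal_cpow_const 1 s (Or.inr (by norm_num))
      · apply ContinuousAt.div_const
        apply ContinuousAt.sub _ continuousAt_const
        apply ContinuousAt.mul continuousAt_const
        exact Complex.continuous_ofReal.continuousAt.comp
          (Real.continuousAt_log (by norm_num))
    have hF1 : F 1 = -(1 / s ^ 2) := by
      simp [hF, Complex.one_cpow]
      field_simp
    rw [← hF1]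
    exact hc.tendsto.mono_left nhdsWithin_le_nhds
  have := intervalIntegral.integral_eq_sub_of_hasDerivAt_of_tendsto zero_lt_one hderiv hint h0 h1
  rw [← integral_Ioc_eq_integral_Ioo, ← intervalIntegral.integral_of_le zero_le_one, this]
  ring

lemma aux_mellin_rpow (p : ℝ) {ζ : ℂ} (h : -p < ζ.re) :
    mellinT (fun r : ℝ => ((r ^ p : ℝ) : ℂ)) ζ = 1 / (ζ + p) := by
  have hre : 0 < (ζ + p).re := by simp [Complex.add_re]; linarith
  rw [mellinT, ← aux_int1 hre]
  apply setIntegral_congr_fun measurableSet_Ioo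
  intro r hr
  have hr0 : 0 < r := hr.1
  simp only
  rw [Complex.ofReal_cpow hr0.le, ← Complex.cpow_add _ _ (by exact_mod_cast ne_of_gt hr0)]
  congr 1
  ring

theorem stmt_8 (p q : ℝ) (m n : ℤ) :
    (p + n - q + m ≠ 0 →
      IsDiamondRadial p q m n (fun r : ℝ =>
        (((((n : ℝ) - q) / (p + n - q + m)) * r ^ (q - (m : ℝ)) +
          (((m : ℝ) + p) / (p + n - q + m)) * r ^ (p + (n : ℝ)) : ℝ) : ℂ))) ∧
    (p + n - q + m = 0 →
      IsDiamondRadial p q m n (fun r : ℝ =>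
        ((r ^ (q - (m : ℝ)) * (1 - ((n : ℝ) - q) * Real.log r) : ℝ) : ℂ))) := by
  set σ : ℝ := |p| + |q| + |(m:ℝ)| + |(n:ℝ)| + 1 with hσ
  have key : ∀ ζ : ℂ, σ < ζ.re →
      (0 < (ζ + ((q:ℂ) - (m:ℂ))).re ∧ 0 < (ζ + ((p:ℂ) + (n:ℂ))).re ∧
       mellinT (fun r : ℝ => ((r ^ p : ℝ) : ℂ)) (ζ + n) = 1 / (ζ + n + p) ∧
       mellinT (fun r : ℝ => ((r ^ q : ℝ) : ℂ)) (ζ - m) = 1 / (ζ - m + q)) := by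
    intro ζ hζ
    simp only [hσ] at hζ
    have a1 := neg_abs_le p
    have a2 := le_abs_self p
    have a3 := neg_abs_le q
    have a4 := le_abs_self q
    have a5 := neg_abs_le ((m:ℝ))
    have a6 := le_abs_self ((m:ℝ))
    have a7 := neg_abs_le ((n:ℝ))
    have a8 := le_abs_self ((n:ℝ))
    have b1 := abs_nonneg p
    have b2 := abs_nonneg q
    have b3 := abs_nonneg ((m:ℝ))
    have b4 := abs_nonneg ((n:ℝ))
    refine ⟨?_, ?_, ?_, ?_⟩
    · simp only [Complex.add_re, Complex.sub_re, Complex.ofReal_re, Complex.intCast_re]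
      linarith
    · simp only [Complex.add_re, Complex.ofReal_re, Complex.intCast_re]
      linarith
    · rw [aux_mellin_rpow p (by
        simp only [Complex.add_re, Complex.intCast_re]; linarith)]
    · rw [aux_mellin_rpow q (by
        simp only [Complex.sub_re, Complex.intCast_re]; linarith)]
  constructor
  · intro hℓ
    refine ⟨σ, fun ζ hζ => ?_⟩
    obtain ⟨hs1, hs2, hm1, hm2⟩ := key ζ hζ
    rw [hm1, hm2]
    have hs1' : ζ + ((q:ℂ) - m) ≠ 0 := fun h => by simp [h] at hs1
    have hs2' : ζ + ((p:ℂ) + n) ≠ 0 := fun h => by simp [h] at hs2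
    have hℓ' : (p:ℂ) + n - q + m ≠ 0 := by exact_mod_cast hℓ
    have lhs : mellinT (fun r : ℝ =>
        (((((n : ℝ) - q) / (p + n - q + m)) * r ^ (q - (m : ℝ)) +
          (((m : ℝ) + p) / (p + n - q + m)) * r ^ (p + (n : ℝ)) : ℝ) : ℂ)) ζ =
        ((((n:ℝ) - q) / (p + n - q + m) : ℝ) : ℂ) * (1 / (ζ + ((q:ℂ) - m))) +
        ((((m:ℝ) + p) / (p + n - q + m) : ℝ) : ℂ) * (1 / (ζ + ((p:ℂ) + n))) := by
      rw [mellinT]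
      have hcong : ∀ r ∈ Ioo (0:ℝ) 1,
          ((((((n : ℝ) - q) / (p + n - q + m)) * r ^ (q - (m : ℝ)) +
          (((m : ℝ) + p) / (p + n - q + m)) * r ^ (p + (n : ℝ)) : ℝ) : ℂ)) * (r:ℂ) ^ (ζ - 1)
          = ((((n:ℝ) - q) / (p + n - q + m) : ℝ) : ℂ) * (r:ℂ) ^ (ζ + ((q:ℂ) - m) - 1) +
            ((((m:ℝ) + p) / (p + n - q + m) : ℝ) : ℂ) * (r:ℂ) ^ (ζ + ((p:ℂ) + n) - 1) := by
        intro r hr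
        have hr0 : (0:ℝ) < r := hr.1
        have hrc : (r:ℂ) ≠ 0 := by exact_mod_cast ne_of_gt hr0
        rw [show ζ + ((q:ℂ) - m) - 1 = ((q:ℝ) - (m:ℝ) : ℝ) + (ζ - 1) by push_cast; ring,
          show ζ + ((p:ℂ) + n) - 1 = ((p:ℝ) + (n:ℝ) : ℝ) + (ζ - 1) by push_cast; ring,
          Complex.cpow_add _ _ hrc, Complex.cpow_add _ _ hrc,
          ← Complex.ofReal_cpow hr0.le, ← Complex.ofReal_cpow hr0.le]
        push_cast
        ring
      rw [setIntegral_congr_fun measurableSet_Ioo hcong, integral_add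
        ((aux_intOn1 hs1).const_mul _) ((aux_intOn1 hs2).const_mul _),
        integral_const_mul, integral_const_mul, aux_int1 hs1, aux_int1 hs2]
    have c1 : (((((n:ℝ) - q) / (p + n - q + m)) : ℝ) : ℂ) =
        ((n:ℂ) - q) / ((p:ℂ) + n - q + m) := by push_cast; ring
    have c2 : (((((m:ℝ) + p) / (p + n - q + m)) : ℝ) : ℂ) =
        ((m:ℂ) + p) / ((p:ℂ) + n - q + m) := by push_cast; ring
    rw [lhs, c1, c2]
    have hX' : ζ - (m:ℂ) + q ≠ 0 := by
      intro h; apply hs1'; rw [← h]; ring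
    have hY' : ζ + (n:ℂ) + p ≠ 0 := by
      intro h; apply hs2'; rw [← h]; ring
    rw [div_mul_div_comm, div_mul_div_comm,
      div_add_div _ _ (mul_ne_zero hℓ' hs1') (mul_ne_zero hℓ' hs2'),
      mul_one_div, mul_one_div, div_div,
      div_eq_div_iff (mul_ne_zero (mul_ne_zero hℓ' hs1') (mul_ne_zero hℓ' hs2'))
        (mul_ne_zero hY' hX')]
    ring
  · intro hℓ
    refine ⟨σ, fun ζ hζ => ?_⟩
    obtain ⟨hs1, hs2, hm1, hm2⟩ := key ζ hζ
    rw [hm1, hm2]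
    have hs1' : ζ + ((q:ℂ) - m) ≠ 0 := fun h => by simp [h] at hs1
    have hpq : (p:ℂ) + n = (q:ℂ) - m := by
      have : p + (n:ℝ) = q - m := by linarith
      exact_mod_cast this
    have lhs : mellinT (fun r : ℝ =>
        ((r ^ (q - (m : ℝ)) * (1 - ((n : ℝ) - q) * Real.log r) : ℝ) : ℂ)) ζ =
        1 / (ζ + ((q:ℂ) - m)) - (((n:ℝ) - q : ℝ) : ℂ) * -(1 / (ζ + ((q:ℂ) - m)) ^ 2) := by
      rw [mellinT]
      have hcong : ∀ r ∈ Ioo (0:ℝ) 1,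
          (((r ^ (q - (m : ℝ)) * (1 - ((n : ℝ) - q) * Real.log r) : ℝ) : ℂ)) * (r:ℂ) ^ (ζ - 1)
          = (r:ℂ) ^ (ζ + ((q:ℂ) - m) - 1) -
            (((n:ℝ) - q : ℝ) : ℂ) * ((r:ℂ) ^ (ζ + ((q:ℂ) - m) - 1) * Real.log r) := by
        intro r hr
        have hr0 : (0:ℝ) < r := hr.1
        have hrc : (r:ℂ) ≠ 0 := by exact_mod_cast ne_of_gt hr0
        rw [show ζ + ((q:ℂ) - m) - 1 = ((q:ℝ) - (m:ℝ) : ℝ) + (ζ - 1) by push_cast; ring,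
          Complex.cpow_add _ _ hrc, ← Complex.ofReal_cpow hr0.le]
        push_cast
        ring
      rw [setIntegral_congr_fun measurableSet_Ioo hcong, integral_sub
        (aux_intOn1 hs1) ((aux_intOn2 hs1).const_mul _),
        integral_const_mul, aux_int1 hs1, aux_int2 hs1]
    have c3 : ((((n:ℝ) - q) : ℝ) : ℂ) = (n:ℂ) - q := by push_cast; ring
    have e1 : ζ + ((q:ℂ) - m) = ζ - m + q := by ring
    have e2 : ζ + (n:ℂ) + p = ζ - m + q := by linear_combination hpq
    rw [lhs, c3, e1, e2]
    rw [e1] at hs1'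
    field_simp
    ring
end

section
/- For integers m and k: z^m ⋄ z̄^k equals (−k/(m−k))·z̄^{k−m} + (m/(m−k))·z^{m−k} if m ≠ k, and equals 1 + k·log|z|² if m = k. -/
open MeasureTheory Set

/-- `ω` is the radial part of the ⋄-convolution of the quasihomogeneous functions
`φ(r)e^{imθ}` and `ψ(r)e^{inθ}`:
`M(ω)(ζ) = (ζ - m + n) M(φ)(ζ + n) M(ψ)(ζ - m)` on a right half-plane. -/
def IsDiamond (m n : ℤ) (φ ψ ω : ℝ → ℂ) : Prop :=
  ∃ σ : ℝ, ∀ ζ : ℂ, σ < ζ.re →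
    mellinT ω ζ = (ζ - m + n) * mellinT φ (ζ + n) * mellinT ψ (ζ - m)

open Complex Real Filter Asymptotics in
lemma aux_intA {c : ℂ} (h : -1 < c.re) :
    IntegrableOn (fun r : ℝ => (r:ℂ) ^ c) (Ioo (0:ℝ) 1) ∧
    ∫ r in Ioo (0:ℝ) 1, (r:ℂ) ^ c = 1/(c+1) := by
  have hint := intervalIntegral.intervalIntegrable_cpow' (a := 0) (b := 1) h
  have hc : c + 1 ≠ 0 := by
    intro h0
    have : (c+1).re = 0 := by rw [h0]; simp
    simp only [Complex.add_re, Complex.one_re] at this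
    linarith
  constructor
  · exact (intervalIntegrable_iff_integrableOn_Ioo_of_le zero_le_one).mp hint
  · rw [← integral_Ioc_eq_integral_Ioo, ← intervalIntegral.integral_of_le zero_le_one,
      integral_cpow (Or.inl h)]
    simp [Complex.zero_cpow hc]

open Complex Real Filter Asymptotics in
lemma aux_intB (a : ℤ) {ζ : ℂ} (h : 0 < ζ.re + a) :
    IntegrableOn (fun r : ℝ => ((r ^ a : ℝ) : ℂ) * (r:ℂ) ^ (ζ-1)) (Ioo (0:ℝ) 1) ∧
    mellinT (fun r : ℝ => ((r ^ a : ℝ) : ℂ)) ζ = 1/(ζ + a) := by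
  have hre : -1 < (ζ + a - 1).re := by
    simp only [Complex.sub_re, Complex.add_re, Complex.one_re, Complex.intCast_re]
    linarith
  have heq : EqOn (fun r : ℝ => ((r ^ a : ℝ) : ℂ) * (r:ℂ) ^ (ζ-1))
      (fun r : ℝ => (r:ℂ) ^ (ζ + a - 1)) (Ioo (0:ℝ) 1) := by
    intro r hr
    have hr0 : (r:ℂ) ≠ 0 := by
      simp only [ne_eq, Complex.ofReal_eq_zero]; exact ne_of_gt hr.1
    simp only
    rw [Complex.ofReal_zpow, ← Complex.cpow_intCast (r:ℂ) a, ← Complex.cpow_add _ _ hr0]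
    ring_nf
  obtain ⟨hi, hv⟩ := aux_intA hre
  constructor
  · exact (hi.congr_fun (fun x hx => (heq hx).symm) measurableSet_Ioo)
  · rw [mellinT, setIntegral_congr_fun measurableSet_Ioo heq, hv]
    ring_nf

open Complex Real Filter Asymptotics in
lemma aux_intC {ζ : ℂ} (h : 0 < ζ.re) :
    IntegrableOn (fun r : ℝ => ((Real.log r : ℝ) : ℂ) * (r:ℂ) ^ (ζ-1)) (Ioo (0:ℝ) 1) ∧
    ∫ r in Ioo (0:ℝ) 1, ((Real.log r : ℝ) : ℂ) * (r:ℂ) ^ (ζ-1) = -(1/ζ^2) := by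
  set f : ℝ → ℂ := Set.indicator (Ioc (0:ℝ) 1) (fun _ => (1:ℂ)) with hf
  have hζ : ζ ≠ 0 := by intro h0; rw [h0] at h; simp at h
  have hfc : LocallyIntegrableOn f (Ioi (0:ℝ)) := by
    have : Integrable f := by
      rw [hf, integrable_indicator_iff measurableSet_Ioc]
      exact integrableOn_const measure_Ioc_lt_top.ne
    exact this.locallyIntegrable.locallyIntegrableOn _
  have hf_top : f =O[atTop] fun x : ℝ => x ^ (-(ζ.re + 1)) := by
    have h0 : f =ᶠ[atTop] (fun _ => (0:ℂ)) := by
      filter_upwards [eventually_gt_atTop (1:ℝ)] with x hx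
      exact Set.indicator_of_notMem (fun hm => absurd hm.2 (not_le.mpr hx)) _
    exact (Asymptotics.isBigO_zero _ _).congr' h0.symm EventuallyEq.rfl
  have hf_bot : f =O[nhdsWithin 0 (Ioi 0)] fun x : ℝ => x ^ (-(0:ℝ)) := by
    refine Asymptotics.isBigO_of_le _ fun x => ?_
    rw [neg_zero, Real.rpow_zero]
    simp only [norm_one]
    classical
    by_cases hx : x ∈ Ioc (0:ℝ) 1 <;> simp [hf, Set.indicator, hx]
  obtain ⟨hconv, hderiv⟩ :=
    mellin_hasDerivAt_of_isBigO_rpow (E := ℂ) hfc hf_top (by linarith) hf_bot h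
  have hev : mellin f =ᶠ[nhds ζ] fun z : ℂ => 1/z := by
    have hmem : {z : ℂ | 0 < z.re} ∈ nhds ζ :=
      (isOpen_lt continuous_const Complex.continuous_re).mem_nhds h
    filter_upwards [hmem] with z hz
    exact (hasMellin_one_Ioc hz).2
  have h2 : HasDerivAt (mellin f) (-(1/ζ^2)) ζ := by
    have := hasDerivAt_inv hζ
    simp only [one_div]
    exact HasDerivAt.congr_of_eventuallyEq (by simpa using this) hev
  have hval : mellin (fun t => Real.log t • f t) ζ = -(1/ζ^2) := hderiv.unique h2
  have hind : (fun t : ℝ => (t:ℂ) ^ (ζ-1) • (Real.log t • f t)) =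
      Set.indicator (Ioc (0:ℝ) 1) (fun t => ((Real.log t : ℝ):ℂ) * (t:ℂ) ^ (ζ-1)) := by
    funext t
    classical
    by_cases ht : t ∈ Ioc (0:ℝ) 1 <;>
      simp [hf, Set.indicator, ht, smul_eq_mul, Complex.real_smul] <;> ring
  have hIoc : ∫ t in Ioc (0:ℝ) 1, ((Real.log t : ℝ):ℂ) * (t:ℂ) ^ (ζ-1) = -(1/ζ^2) := by
    rw [← hval, mellin]
    rw [show (fun t : ℝ => (t:ℂ) ^ (ζ-1) • (Real.log t • f t)) = _ from hind]
    rw [integral_indicator measurableSet_Ioc,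
      Measure.restrict_restrict_of_subset Ioc_subset_Ioi_self]
  constructor
  · have hi : IntegrableOn (fun t : ℝ => (t:ℂ) ^ (ζ-1) • (Real.log t • f t)) (Ioo (0:ℝ) 1) :=
      hconv.mono_set (fun x hx => hx.1)
    refine hi.congr_fun (fun x hx => ?_) measurableSet_Ioo
    have hx' : x ∈ Ioc (0:ℝ) 1 := ⟨hx.1, hx.2.le⟩
    simp [hf, Set.indicator, hx', Complex.real_smul, smul_eq_mul]
    ring
  · rw [← integral_Ioc_eq_integral_Ioo, hIoc]

open Complex in
lemma aux_pointwise (m k : ℤ) (hmk : m ≠ k) (z : ℂ) (hz : z ≠ 0) :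
        ((-k : ℂ) / ((m : ℂ) - k)) * ((starRingEnd ℂ) z) ^ (k - m) +
            ((m : ℂ) / ((m : ℂ) - k)) * z ^ (m - k) =
          (((-k : ℂ) / ((m : ℂ) - k)) * ((‖z‖ ^ (k - m) : ℝ) : ℂ) +
              ((m : ℂ) / ((m : ℂ) - k)) * ((‖z‖ ^ (m - k) : ℝ) : ℂ)) *
            (z / (‖z‖ : ℂ)) ^ (m - k) := by
  set a : ℂ := (‖z‖ : ℂ) with ha
  have ha0 : a ≠ 0 := by
    simp [ha, Complex.ofReal_eq_zero, norm_ne_zero_iff, hz]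
  have hw0 : (starRingEnd ℂ) z ≠ 0 := by simpa using hz
  have hkey : a ^ 2 = z * (starRingEnd ℂ) z := by
    rw [Complex.mul_conj, ha]
    push_cast [← Complex.sq_norm]
    ring
  have hc1 : ((‖z‖ ^ (k - m) : ℝ) : ℂ) = a ^ (k - m) := by
    rw [ha, Complex.ofReal_zpow]
  have hc2 : ((‖z‖ ^ (m - k) : ℝ) : ℂ) = a ^ (m - k) := by
    rw [ha, Complex.ofReal_zpow]
  rw [hc1, hc2]
  set d := m - k with hd
  have hkm : k - m = -d := by omega
  rw [hkm]
  rw [zpow_neg, zpow_neg, div_zpow]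
  set W := (starRingEnd ℂ) z ^ d with hW
  set Z := z ^ d with hZ
  set A := a ^ d with hA
  have hWne : W ≠ 0 := zpow_ne_zero _ hw0
  have hZne : Z ≠ 0 := zpow_ne_zero _ hz
  have hAne : A ≠ 0 := zpow_ne_zero _ ha0
  have hA2 : A ^ 2 = Z * W := by
    rw [hA, hZ, hW, sq, ← mul_zpow, ← mul_zpow, ← sq, hkey]
  have hC : (m : ℂ) - k ≠ 0 := by
    intro h0
    apply hmk
    exact_mod_cast sub_eq_zero.mp h0
  field_simp
  linear_combination (-(k:ℂ)) * hA2

theorem stmt_9 (m k : ℤ) :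
    (m ≠ k →
      IsDiamond m (-k) (fun r : ℝ => ((r ^ m : ℝ) : ℂ)) (fun r : ℝ => ((r ^ k : ℝ) : ℂ))
        (fun r : ℝ => (((-k : ℂ) / ((m : ℂ) - k)) * ((r ^ (k - m) : ℝ) : ℂ) +
          ((m : ℂ) / ((m : ℂ) - k)) * ((r ^ (m - k) : ℝ) : ℂ))) ∧
      ∀ z : ℂ, z ≠ 0 →
        ((-k : ℂ) / ((m : ℂ) - k)) * ((starRingEnd ℂ) z) ^ (k - m) +
            ((m : ℂ) / ((m : ℂ) - k)) * z ^ (m - k) =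
          (((-k : ℂ) / ((m : ℂ) - k)) * ((‖z‖ ^ (k - m) : ℝ) : ℂ) +
              ((m : ℂ) / ((m : ℂ) - k)) * ((‖z‖ ^ (m - k) : ℝ) : ℂ)) *
            (z / (‖z‖ : ℂ)) ^ (m - k)) ∧
    (m = k →
      IsDiamond m (-k) (fun r : ℝ => ((r ^ m : ℝ) : ℂ)) (fun r : ℝ => ((r ^ k : ℝ) : ℂ))
        (fun r : ℝ => 1 + (k : ℂ) * ((Real.log (r ^ 2) : ℝ) : ℂ)) ∧
      ∀ z : ℂ, z ≠ 0 →
        (1 : ℂ) + (k : ℂ) * ((Real.log (Complex.normSq z) : ℝ) : ℂ) =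
          1 + (k : ℂ) * ((Real.log (‖z‖ ^ 2) : ℝ) : ℂ)) := by
  constructor
  · intro hmk
    constructor
    · -- IsDiamond, m ≠ k
      refine ⟨((|m| : ℤ) : ℝ) + ((|k| : ℤ) : ℝ) + 1, fun ζ hζ => ?_⟩
      have hm1 : (m : ℝ) ≤ ((|m| : ℤ) : ℝ) := by exact_mod_cast le_abs_self m
      have hm2 : -(m : ℝ) ≤ ((|m| : ℤ) : ℝ) := by exact_mod_cast neg_le_abs m
      have hk1 : (k : ℝ) ≤ ((|k| : ℤ) : ℝ) := by exact_mod_cast le_abs_self k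
      have hk2 : -(k : ℝ) ≤ ((|k| : ℤ) : ℝ) := by exact_mod_cast neg_le_abs k
      have h1 : 0 < ζ.re + ((k - m : ℤ) : ℝ) := by push_cast; linarith
      have h2 : 0 < ζ.re + ((m - k : ℤ) : ℝ) := by push_cast; linarith
      have h3 : 0 < (ζ + ((-k : ℤ) : ℂ)).re + (m : ℝ) := by
        simp only [Complex.add_re, Complex.intCast_re]; push_cast; linarith
      have h4 : 0 < (ζ - (m : ℂ)).re + (k : ℝ) := by
        simp only [Complex.sub_re, Complex.intCast_re]
        push_cast
        linarith
      obtain ⟨hi1, hv1⟩ := aux_intB (k - m) h1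
      obtain ⟨hi2, hv2⟩ := aux_intB (m - k) h2
      obtain ⟨_, hφ⟩ := aux_intB m h3
      obtain ⟨_, hψ⟩ := aux_intB k h4
      have hmell : mellinT (fun r : ℝ => (((-k : ℂ) / ((m : ℂ) - k)) * ((r ^ (k - m) : ℝ) : ℂ) +
          ((m : ℂ) / ((m : ℂ) - k)) * ((r ^ (m - k) : ℝ) : ℂ))) ζ
          = ((-k : ℂ) / ((m : ℂ) - k)) * (1/(ζ + ((k - m : ℤ) : ℂ)))
            + ((m : ℂ) / ((m : ℂ) - k)) * (1/(ζ + ((m - k : ℤ) : ℂ))) := by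
        rw [mellinT]
        have : ∀ r : ℝ, (((-k : ℂ) / ((m : ℂ) - k)) * ((r ^ (k - m) : ℝ) : ℂ)
              + ((m : ℂ) / ((m : ℂ) - k)) * ((r ^ (m - k) : ℝ) : ℂ))
            * (r:ℂ) ^ (ζ - 1)
            = ((-k : ℂ) / ((m : ℂ) - k)) * (((r ^ (k - m) : ℝ) : ℂ) * (r:ℂ) ^ (ζ - 1))
              + ((m : ℂ) / ((m : ℂ) - k)) * (((r ^ (m - k) : ℝ) : ℂ) * (r:ℂ) ^ (ζ - 1)) :=
          fun r => by ring
        simp_rw [this]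
        rw [integral_add (hi1.const_mul _) (hi2.const_mul _),
          integral_const_mul, integral_const_mul]
        rw [show (∫ r in Ioo (0:ℝ) 1, ((r ^ (k - m) : ℝ) : ℂ) * (r:ℂ) ^ (ζ - 1))
            = mellinT (fun r : ℝ => ((r ^ (k - m) : ℝ) : ℂ)) ζ from rfl, hv1]
        rw [show (∫ r in Ioo (0:ℝ) 1, ((r ^ (m - k) : ℝ) : ℂ) * (r:ℂ) ^ (ζ - 1))
            = mellinT (fun r : ℝ => ((r ^ (m - k) : ℝ) : ℂ)) ζ from rfl, hv2]
      rw [hmell, hφ, hψ]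
      have hA : ζ + ((k - m : ℤ) : ℂ) ≠ 0 := by
        intro h0
        have : (ζ + ((k - m : ℤ) : ℂ)).re = 0 := by rw [h0]; simp
        simp only [Complex.add_re, Complex.intCast_re] at this
        linarith
      have hB : ζ + ((m - k : ℤ) : ℂ) ≠ 0 := by
        intro h0
        have : (ζ + ((m - k : ℤ) : ℂ)).re = 0 := by rw [h0]; simp
        simp only [Complex.add_re, Complex.intCast_re] at this
        linarith
      have hC : (m : ℂ) - k ≠ 0 := by
        intro h0; exact hmk (by exact_mod_cast sub_eq_zero.mp h0)
      have hA' : ζ + ((-k : ℤ) : ℂ) + (m : ℂ) ≠ 0 := by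
        intro h0; apply hB; rw [← h0]; push_cast; ring
      have hB' : ζ - (m : ℂ) + (k : ℂ) ≠ 0 := by
        intro h0; apply hA; rw [← h0]; push_cast; ring
      have hC2 : -(k : ℂ) + m ≠ 0 := by
        intro h0; apply hC; linear_combination h0
      push_cast at hA hB hA' hB' ⊢
      field_simp [hC2]
      ring
    · exact fun z hz => aux_pointwise m k hmk z hz
  · intro hmk
    subst hmk
    constructor
    · -- IsDiamond, m = k
      refine ⟨((|m| : ℤ) : ℝ) + 1, fun ζ hζ => ?_⟩
      have hm1 : (m : ℝ) ≤ ((|m| : ℤ) : ℝ) := by exact_mod_cast le_abs_self m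
      have hm2 : -(m : ℝ) ≤ ((|m| : ℤ) : ℝ) := by exact_mod_cast neg_le_abs m
      have habs : (0 : ℝ) ≤ ((|m| : ℤ) : ℝ) := by exact_mod_cast abs_nonneg m
      have h0 : 0 < ζ.re := by linarith
      have hζ0 : ζ ≠ 0 := by
        intro hh; rw [hh] at h0; simp at h0
      have h3 : 0 < (ζ + ((-m : ℤ) : ℂ)).re + (m : ℝ) := by
        simp only [Complex.add_re, Complex.intCast_re]; push_cast; linarith
      have h4 : 0 < (ζ - (m : ℂ)).re + (m : ℝ) := by
        simp only [Complex.sub_re, Complex.intCast_re]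
        push_cast
        linarith
      obtain ⟨_, hφ⟩ := aux_intB m h3
      obtain ⟨_, hψ⟩ := aux_intB m h4
      have hre1 : -1 < (ζ - 1).re := by
        simp only [Complex.sub_re, Complex.one_re]; linarith
      obtain ⟨hiA, hvA⟩ := aux_intA hre1
      obtain ⟨hiC, hvC⟩ := aux_intC h0
      have hmell : mellinT (fun r : ℝ => 1 + (m : ℂ) * ((Real.log (r ^ 2) : ℝ) : ℂ)) ζ
          = 1/ζ + (2 * m : ℂ) * (-(1/ζ^2)) := by
        rw [mellinT]
        have heq : EqOn (fun r : ℝ => (1 + (m : ℂ) * ((Real.log (r ^ 2) : ℝ) : ℂ))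
            * (r:ℂ) ^ (ζ - 1))
            (fun r : ℝ => (r:ℂ) ^ (ζ - 1)
              + (2 * m : ℂ) * (((Real.log r : ℝ) : ℂ) * (r:ℂ) ^ (ζ - 1)))
            (Ioo (0:ℝ) 1) := by
          intro r _
          simp only [Real.log_pow]
          push_cast
          ring
        rw [setIntegral_congr_fun measurableSet_Ioo heq,
          integral_add hiA (hiC.const_mul _), integral_const_mul, hvA, hvC]
        ring_nf
      rw [hmell, hφ, hψ]
      have hz1 : ζ + ((-m : ℤ) : ℂ) + (m : ℂ) ≠ 0 := by
        intro h0'; apply hζ0; rw [← h0']; push_cast; ring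
      have hz2 : ζ - (m : ℂ) + (m : ℂ) ≠ 0 := by
        intro h0'; apply hζ0; rw [← h0']; push_cast; ring
      push_cast at hz1 hz2 ⊢
      field_simp
      ring
    · intro z _
      rw [Complex.sq_norm]
end

section
/- Let P and Q be Laurent polynomials. Then G = P ⋄ Q̄ satisfies ∂G/∂z = P'(z)·Q̄(1/z̄), ∂G/∂z̄ = P(1/z̄)·(Q')‾(z) on ℂ\{0}, and G(1) = P(1)·Q̄(1). Moreover G is the unique function on ℂ\{0} with these properties. -/
open Complex

/-- The Wirtinger derivative `∂F/∂z = ½(∂F/∂x - i ∂F/∂y)`. -/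
noncomputable def wirtingerZ (F : ℂ → ℂ) (z : ℂ) : ℂ :=
  (fderiv ℝ F z 1 - Complex.I * fderiv ℝ F z Complex.I) / 2

/-- The Wirtinger derivative `∂F/∂z̄ = ½(∂F/∂x + i ∂F/∂y)`. -/
noncomputable def wirtingerZBar (F : ℂ → ℂ) (z : ℂ) : ℂ :=
  (fderiv ℝ F z 1 + Complex.I * fderiv ℝ F z Complex.I) / 2

/-- The basic convolutions `z^m ⋄ z̄^k`. -/
noncomputable def Dmk (m k : ℤ) (z : ℂ) : ℂ :=
  if m = k then 1 + (k : ℂ) * ((Real.log (Complex.normSq z) : ℝ) : ℂ)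
  else ((-k : ℂ) / ((m : ℂ) - k)) * ((starRingEnd ℂ) z) ^ (k - m) +
    ((m : ℂ) / ((m : ℂ) - k)) * z ^ (m - k)

/-- Evaluation of the Laurent polynomial with coefficients `a`. -/
noncomputable def lEval (a : ℤ →₀ ℂ) (z : ℂ) : ℂ := a.sum fun i c => c * z ^ i

/-- The derivative of the Laurent polynomial with coefficients `a`, evaluated at `z`. -/
noncomputable def lDeriv (a : ℤ →₀ ℂ) (z : ℂ) : ℂ := a.sum fun i c => c * i * z ^ (i - 1)

/-- The convolution `P ⋄ Q̄` for the Laurent polynomials with coefficients `a` and `b`,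
extended bilinearly from `z^m ⋄ z̄^k`. -/
noncomputable def lDiamond (a b : ℤ →₀ ℂ) (z : ℂ) : ℂ :=
  a.sum fun m cm => b.sum fun k ck => cm * (starRingEnd ℂ) ck * Dmk m k z

/-! ### Auxiliary machinery -/

/-- The real-linear map `v ↦ α v + β v̄`. -/
noncomputable def wlin (α β : ℂ) : ℂ →L[ℝ] ℂ :=
  α • (ContinuousLinearMap.id ℝ ℂ) + β • (conjCLE.toContinuousLinearMap)

lemma wlin_apply (α β v : ℂ) : wlin α β v = α * v + β * (starRingEnd ℂ) v := by
  simp [wlin, smul_eq_mul]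

lemma wlin_sum {ι : Type*} (s : Finset ι) (f g : ι → ℂ) :
    ∑ i ∈ s, wlin (f i) (g i) = wlin (∑ i ∈ s, f i) (∑ i ∈ s, g i) := by
  ext v
  simp [wlin_apply, Finset.sum_add_distrib, Finset.sum_mul]

lemma wlin_smul (c α β : ℂ) : c • wlin α β = wlin (c * α) (c * β) := by
  ext v
  simp [wlin_apply, smul_eq_mul]
  ring

lemma wirtingerZ_eq {F : ℂ → ℂ} {z α β : ℂ} (h : HasFDerivAt F (wlin α β) z) :
    wirtingerZ F z = α := by
  rw [wirtingerZ, h.fderiv, wlin_apply, wlin_apply]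
  simp only [map_one, mul_one, Complex.conj_I]
  linear_combination (β/2 - α/2) * Complex.I_sq

lemma wirtingerZBar_eq {F : ℂ → ℂ} {z α β : ℂ} (h : HasFDerivAt F (wlin α β) z) :
    wirtingerZBar F z = β := by
  rw [wirtingerZBar, h.fderiv, wlin_apply, wlin_apply]
  simp only [map_one, mul_one, Complex.conj_I]
  linear_combination (α/2 - β/2) * Complex.I_sq

lemma hb_zpow (n : ℤ) {z : ℂ} (hz : z ≠ 0) :
    HasFDerivAt (fun w : ℂ => w ^ n) (wlin ((n : ℂ) * z ^ (n - 1)) 0) z := by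
  have h := ((hasDerivAt_zpow n z (Or.inl hz)).hasFDerivAt).restrictScalars ℝ
  refine h.congr_fderiv ?_
  ext v
  simp [wlin_apply, smul_eq_mul]
  ring

lemma hb_conj_zpow (n : ℤ) {z : ℂ} (hz : z ≠ 0) :
    HasFDerivAt (fun w : ℂ => ((starRingEnd ℂ) w) ^ n)
      (wlin 0 ((n : ℂ) * ((starRingEnd ℂ) z) ^ (n - 1))) z := by
  have hcz : (starRingEnd ℂ) z ≠ 0 := by simpa using hz
  have h := (hb_zpow n hcz).comp z (conjCLE.toContinuousLinearMap.hasFDerivAt (x := z))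
  refine h.congr_fderiv ?_
  ext v
  simp [wlin_apply]

lemma hb_log {z : ℂ} (hz : z ≠ 0) :
    HasFDerivAt (fun w : ℂ => ((Real.log (Complex.normSq w) : ℝ) : ℂ))
      (wlin z⁻¹ ((starRingEnd ℂ) z)⁻¹) z := by
  have hre : HasFDerivAt (fun w : ℂ => w.re) (Complex.reCLM : ℂ →L[ℝ] ℝ) z :=
    Complex.reCLM.hasFDerivAt
  have him : HasFDerivAt (fun w : ℂ => w.im) (Complex.imCLM : ℂ →L[ℝ] ℝ) z :=
    Complex.imCLM.hasFDerivAt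
  have hns : HasFDerivAt (fun w : ℂ => Complex.normSq w)
      ((z.re • Complex.reCLM + z.re • Complex.reCLM) +
        (z.im • Complex.imCLM + z.im • Complex.imCLM)) z := by
    have h0 : (fun w : ℂ => Complex.normSq w) = fun w : ℂ => w.re * w.re + w.im * w.im :=
      funext fun w => Complex.normSq_apply w
    rw [h0]
    exact (hre.mul hre).add (him.mul him)
  have hlog := (Real.hasDerivAt_log (Complex.normSq_pos.2 hz).ne').comp_hasFDerivAt z hns
  have h := (Complex.ofRealCLM.hasFDerivAt).comp z hlog
  refine h.congr_fderiv ?_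
  ext v
  simp only [wlin_apply, ContinuousLinearMap.coe_comp', Function.comp_apply,
    ContinuousLinearMap.coe_smul', Pi.smul_apply, ContinuousLinearMap.add_apply,
    Complex.ofRealCLM_apply, Complex.reCLM_apply, Complex.imCLM_apply, smul_eq_mul]
  rw [Complex.inv_def, Complex.inv_def]
  push_cast
  rw [Complex.ext_iff]
  constructor <;>
  · simp [Complex.normSq_apply, Complex.mul_re, Complex.mul_im]
    ring

lemma hb_Dmk (m k : ℤ) {z : ℂ} (hz : z ≠ 0) :
    HasFDerivAt (Dmk m k)
      (wlin ((m : ℂ) * z ^ (m - k - 1)) ((k : ℂ) * ((starRingEnd ℂ) z) ^ (k - m - 1))) z := by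
  unfold Dmk
  by_cases h : m = k
  · subst h
    simp only [if_pos rfl]
    have := ((hb_log hz).const_mul ((m : ℂ))).const_add 1
    refine this.congr_fderiv ?_
    have e1 : m - m - 1 = (-1 : ℤ) := by ring
    rw [e1]
    ext v
    simp [wlin_apply, smul_eq_mul, zpow_neg_one]
    ring
  · simp only [if_neg h]
    have hmk : (m : ℂ) - k ≠ 0 := by
      have : ((m - k : ℤ) : ℂ) ≠ 0 := Int.cast_ne_zero.2 (sub_ne_zero.2 h)
      push_cast at this; exact this
    have h1 := (hb_conj_zpow (k - m) hz).const_mul ((-k : ℂ) / ((m : ℂ) - k))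
    have h2 := (hb_zpow (m - k) hz).const_mul ((m : ℂ) / ((m : ℂ) - k))
    refine (h1.add h2).congr_fderiv ?_
    ext v
    simp only [wlin_apply, ContinuousLinearMap.add_apply, ContinuousLinearMap.coe_smul',
      Pi.smul_apply, smul_eq_mul]
    push_cast
    field_simp
    ring

lemma hb_lDiamond (a b : ℤ →₀ ℂ) {z : ℂ} (hz : z ≠ 0) :
    HasFDerivAt (lDiamond a b)
      (wlin
        (∑ m ∈ a.support, ∑ k ∈ b.support,
          a m * (starRingEnd ℂ) (b k) * ((m : ℂ) * z ^ (m - k - 1)))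
        (∑ m ∈ a.support, ∑ k ∈ b.support,
          a m * (starRingEnd ℂ) (b k) * ((k : ℂ) * ((starRingEnd ℂ) z) ^ (k - m - 1)))) z := by
  have h0 : lDiamond a b = fun w => ∑ m ∈ a.support, ∑ k ∈ b.support,
      a m * (starRingEnd ℂ) (b k) * Dmk m k w := by
    funext w; rfl
  rw [h0, ← wlin_sum]
  apply HasFDerivAt.fun_sum
  intro m _
  rw [← wlin_sum]
  apply HasFDerivAt.fun_sum
  intro k _
  rw [← wlin_smul]
  exact (hb_Dmk m k hz).const_mul _

lemma main_wirtingerZ (a b : ℤ →₀ ℂ) {z : ℂ} (hz : z ≠ 0) :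
    wirtingerZ (lDiamond a b) z =
      lDeriv a z * (b.sum fun k ck => (starRingEnd ℂ) ck * z ^ (-k)) := by
  rw [wirtingerZ_eq (hb_lDiamond a b hz)]
  rw [lDeriv, Finsupp.sum, Finsupp.sum, Finset.sum_mul]
  refine Finset.sum_congr rfl fun m _ => ?_
  rw [Finset.mul_sum]
  refine Finset.sum_congr rfl fun k _ => ?_
  have e : m - k - 1 = (m - 1) + (-k) := by ring
  rw [e, zpow_add₀ hz]
  ring

lemma main_wirtingerZBar (a b : ℤ →₀ ℂ) {z : ℂ} (hz : z ≠ 0) :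
    wirtingerZBar (lDiamond a b) z =
      (a.sum fun m cm => cm * ((starRingEnd ℂ) z) ^ (-m)) *
        (b.sum fun k ck => (starRingEnd ℂ) ck * (k : ℂ) * ((starRingEnd ℂ) z) ^ (k - 1)) := by
  have hcz : (starRingEnd ℂ) z ≠ 0 := by simpa using hz
  rw [wirtingerZBar_eq (hb_lDiamond a b hz)]
  rw [Finsupp.sum, Finsupp.sum, Finset.sum_mul]
  refine Finset.sum_congr rfl fun m _ => ?_
  rw [Finset.mul_sum]
  refine Finset.sum_congr rfl fun k _ => ?_
  have e : k - m - 1 = (-m) + (k - 1) := by ring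
  rw [e, zpow_add₀ hcz]
  ring

lemma Dmk_one (m k : ℤ) : Dmk m k 1 = 1 := by
  unfold Dmk
  by_cases h : m = k
  · simp [h]
  · have hmk : (m : ℂ) - k ≠ 0 := by
      have : ((m - k : ℤ) : ℂ) ≠ 0 := Int.cast_ne_zero.2 (sub_ne_zero.2 h)
      push_cast at this; exact this
    simp only [if_neg h, map_one, one_zpow, mul_one]
    field_simp
    ring

lemma lDiamond_one (a b : ℤ →₀ ℂ) :
    lDiamond a b 1 = lEval a 1 * (starRingEnd ℂ) (lEval b 1) := by
  rw [lDiamond, lEval, lEval, Finsupp.sum, Finsupp.sum, Finsupp.sum, map_sum,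
    Finset.sum_mul_sum]
  refine Finset.sum_congr rfl fun m _ => Finset.sum_congr rfl fun k _ => ?_
  simp [Dmk_one]

lemma fderiv_eq_of_wirtinger {F G : ℂ → ℂ} {z : ℂ} (hF : DifferentiableAt ℝ F z)
    (hG : DifferentiableAt ℝ G z) (h1 : wirtingerZ F z = wirtingerZ G z)
    (h2 : wirtingerZBar F z = wirtingerZBar G z) : fderiv ℝ F z = fderiv ℝ G z := by
  unfold wirtingerZ at h1
  unfold wirtingerZBar at h2
  have e1 : fderiv ℝ F z 1 = fderiv ℝ G z 1 := by linear_combination h1 + h2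
  have e2 : fderiv ℝ F z Complex.I = fderiv ℝ G z Complex.I := by
    linear_combination (-Complex.I) * (h2 - h1) +
      (fderiv ℝ F z Complex.I - fderiv ℝ G z Complex.I) * Complex.I_sq
  ext v
  have hv : (v : ℂ) = v.re • (1 : ℂ) + v.im • Complex.I := by
    simp [Complex.ext_iff]
  rw [hv, map_add, map_add, map_smul, map_smul, map_smul, map_smul, e1, e2]

lemma const_on_punctured {f : ℂ → ℂ} (hf : ∀ z : ℂ, z ≠ 0 → HasFDerivAt f (0 : ℂ →L[ℝ] ℂ) z)
    {x y : ℂ} (hx : x ≠ 0) (hy : y ≠ 0) : f x = f y := by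
  set U : Set ℂ := {(0 : ℂ)}ᶜ with hU
  have hmem : ∀ z : ℂ, z ∈ U ↔ z ≠ 0 := fun z => Set.mem_compl_singleton_iff
  have hUo : IsOpen U := isOpen_compl_singleton
  have hUc : IsPreconnected U :=
    (isConnected_compl_singleton_of_one_lt_rank (rank_real_complex ▸ Nat.one_lt_ofNat)
      (0 : ℂ)).isPreconnected
  -- local constancy on balls inside U
  have key : ∀ z : ℂ, ∀ ε : ℝ, Metric.ball z ε ⊆ U → ∀ w ∈ Metric.ball z ε, f w = f z := by
    intro z ε hsub w hw
    have hεpos : 0 < ε := Metric.pos_of_mem_ball hw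
    refine Convex.is_const_of_fderivWithin_eq_zero (convex_ball z ε)
      (fun u hu => ((hf u ((hmem u).1 (hsub hu))).differentiableAt).differentiableWithinAt)
      (fun u hu => ?_) hw (Metric.mem_ball_self hεpos)
    rw [fderivWithin_of_isOpen Metric.isOpen_ball hu]
    exact (hf u ((hmem u).1 (hsub hu))).fderiv
  set V₁ : Set ℂ := {z | ∃ ε : ℝ, 0 < ε ∧ Metric.ball z ε ⊆ U ∧
    ∀ w ∈ Metric.ball z ε, f w = f x} with hV₁
  have memV₁ : ∀ z : ℂ, z ≠ 0 → f z = f x → z ∈ V₁ := by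
    intro z hz hfz
    obtain ⟨ε, hε, hsub⟩ := Metric.isOpen_iff.1 hUo z ((hmem z).2 hz)
    exact ⟨ε, hε, hsub, fun w hw => (key z ε hsub w hw).trans hfz⟩
  have hV₁o : IsOpen V₁ := by
    rw [Metric.isOpen_iff]
    rintro z ⟨ε, hε, hsub, hconst⟩
    refine ⟨ε, hε, fun w hw => ?_⟩
    refine ⟨ε - dist w z, by simpa [Metric.mem_ball] using hw, ?_, ?_⟩
    · exact fun u hu => hsub (Metric.mem_ball.2 (by
        have := Metric.mem_ball.1 hu
        have := Metric.mem_ball.1 hw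
        calc dist u z ≤ dist u w + dist w z := dist_triangle u w z
          _ < (ε - dist w z) + dist w z := by linarith [Metric.mem_ball.1 hu]
          _ = ε := by ring))
    · intro u hu
      refine hconst u (Metric.mem_ball.2 ?_)
      calc dist u z ≤ dist u w + dist w z := dist_triangle u w z
        _ < (ε - dist w z) + dist w z := by linarith [Metric.mem_ball.1 hu]
        _ = ε := by ring
  have hcont : ContinuousOn f U := fun u hu =>
    ((hf u ((hmem u).1 hu)).differentiableAt.continuousAt).continuousWithinAt
  set V₂ : Set ℂ := U ∩ f ⁻¹' ({f x}ᶜ) with hV₂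
  have hV₂o : IsOpen V₂ := hcont.isOpen_inter_preimage hUo isOpen_compl_singleton
  have hcover : U ⊆ V₁ ∪ V₂ := by
    intro z hz
    by_cases hfz : f z = f x
    · exact Or.inl (memV₁ z ((hmem z).1 hz) hfz)
    · exact Or.inr ⟨hz, hfz⟩
  by_contra hne
  have hyV₂ : y ∈ V₂ := ⟨(hmem y).2 hy, fun h => hne (h ▸ rfl)⟩
  obtain ⟨z, _, hz1, hz2⟩ := hUc V₁ V₂ hV₁o hV₂o hcover
    ⟨x, (hmem x).2 hx, memV₁ x hx rfl⟩ ⟨y, (hmem y).2 hy, hyV₂⟩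
  obtain ⟨ε, hε, _, hconst⟩ := hz1
  exact hz2.2 (hconst z (Metric.mem_ball_self hε))

theorem stmt_13 (a b : ℤ →₀ ℂ) :
    -- G = P ⋄ Q̄ solves the system of differential equations on ℂ \ {0}
    (∀ z : ℂ, z ≠ 0 →
      wirtingerZ (lDiamond a b) z =
        lDeriv a z * (b.sum fun k ck => (starRingEnd ℂ) ck * z ^ (-k)) ∧
      wirtingerZBar (lDiamond a b) z =
        (a.sum fun m cm => cm * ((starRingEnd ℂ) z) ^ (-m)) *
          (b.sum fun k ck => (starRingEnd ℂ) ck * (k : ℂ) * ((starRingEnd ℂ) z) ^ (k - 1))) ∧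
    -- constraint G(1) = P(1) Q̄(1)
    lDiamond a b 1 = lEval a 1 * (starRingEnd ℂ) (lEval b 1) ∧
    -- uniqueness
    (∀ G' : ℂ → ℂ, (∀ z : ℂ, z ≠ 0 → DifferentiableAt ℝ G' z) →
      (∀ z : ℂ, z ≠ 0 →
        wirtingerZ G' z =
          lDeriv a z * (b.sum fun k ck => (starRingEnd ℂ) ck * z ^ (-k)) ∧
        wirtingerZBar G' z =
          (a.sum fun m cm => cm * ((starRingEnd ℂ) z) ^ (-m)) *
            (b.sum fun k ck => (starRingEnd ℂ) ck * (k : ℂ) * ((starRingEnd ℂ) z) ^ (k - 1))) →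
      G' 1 = lEval a 1 * (starRingEnd ℂ) (lEval b 1) →
      ∀ z : ℂ, z ≠ 0 → G' z = lDiamond a b z) := by
  refine ⟨fun z hz => ⟨main_wirtingerZ a b hz, main_wirtingerZBar a b hz⟩,
    lDiamond_one a b, ?_⟩
  intro G' hdiff hw hval z hz
  have hzero : ∀ w : ℂ, w ≠ 0 →
      HasFDerivAt (fun u => G' u - lDiamond a b u) (0 : ℂ →L[ℝ] ℂ) w := by
    intro w hw0
    have hd := hb_lDiamond a b hw0
    have h1 : fderiv ℝ G' w = fderiv ℝ (lDiamond a b) w :=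
      fderiv_eq_of_wirtinger (hdiff w hw0) hd.differentiableAt
        (((hw w hw0).1).trans (main_wirtingerZ a b hw0).symm)
        (((hw w hw0).2).trans (main_wirtingerZBar a b hw0).symm)
    have hsub := ((hdiff w hw0).hasFDerivAt).sub hd
    rwa [h1, hd.fderiv, sub_self] at hsub
  have h1 : (fun u => G' u - lDiamond a b u) z = (fun u => G' u - lDiamond a b u) 1 :=
    const_on_punctured hzero hz one_ne_zero
  have h0 : G' 1 - lDiamond a b 1 = 0 := by
    rw [hval, lDiamond_one a b, sub_self]
  simp only at h1
  exact sub_eq_zero.1 (h1.trans h0)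
end
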